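/- arXiv:2001.07672 — 2 statements merged into one kernel-verified Lean document; each statement's English description precedes it below -/
import Mathlib

section
/- Let T be a depth-first search tree of a graph K rooted at r, and let u, v be two distinct vertices of K that are not in an ancestor–descendant relation in T, with least common ancestor w. Then every path from u to v in K passes through a common ancestor of u and v in T. -/
/-- `u` is an ancestor of `v` in the tree `T` rooted at `r`: `u` lies on every
(equivalently, the unique) path in `T` from `r` to `v`. -/
def IsAncestor {V : Type*} (T : SimpleGraph V) (r u v : V) : Prop :=
  ∀ p : T.Walk r v, p.IsPath → u ∈ p.support

/-- `T` is a DFS tree of `K` rooted at `r`: a spanning tree such that every edge of `K`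
connects a vertex to one of its ancestors or descendants in `T`. -/
def IsDFSTree {V : Type*} (K T : SimpleGraph V) (r : V) : Prop :=
  T ≤ K ∧ T.IsTree ∧ ∀ x y : V, K.Adj x y → IsAncestor T r x y ∨ IsAncestor T r y x

/-!
Induct along the walk. Every edge `a — b` of `K` joins comparable vertices, and the ancestors
of a vertex form a chain (they lie on its root path), so a common ancestor `z` of `b` and the
endpoint either remains one for `a`, or is a descendant of `a`, in which case `a` itself is a
common ancestor of `a` and the endpoint.
-/

open SimpleGraph

namespace IsAncestor

variable {V : Type*} {T : SimpleGraph V} {r : V}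

lemma refl (T : SimpleGraph V) (r a : V) : IsAncestor T r a a :=
  fun p _ => p.end_mem_support

lemma trans {a b c : V} (hab : IsAncestor T r a b) (hbc : IsAncestor T r b c) :
    IsAncestor T r a c := by
  classical
  intro p hp
  have hb : b ∈ p.support := hbc p hp
  exact p.support_takeUntil_subset_support hb (hab _ (hp.takeUntil hb))

lemma iff_mem_support (hT : T.IsAcyclic) {a c : V} {q : T.Walk r c} (hq : q.IsPath) :
    IsAncestor T r a c ↔ a ∈ q.support := by
  refine ⟨fun h => h q hq, fun ha p hp => ?_⟩
  have hpq : p = q := congrArg Subtype.val ((hT.subsingleton_path r c).elim ⟨p, hp⟩ ⟨q, hq⟩)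
  rwa [hpq]

lemma total (hT : T.IsTree) {a b c : V} (hac : IsAncestor T r a c)
    (hbc : IsAncestor T r b c) : IsAncestor T r a b ∨ IsAncestor T r b a := by
  classical
  obtain ⟨q, hq, -⟩ := hT.existsUnique_path r c
  have ha : a ∈ q.support := hac q hq
  have hb : b ∈ q.support := hbc q hq
  -- the root paths of `a` and `b` are both prefixes of the root path `q` of `c`
  rw [iff_mem_support hT.isAcyclic (hq.takeUntil hb),
    iff_mem_support hT.isAcyclic (hq.takeUntil ha)]
  exact (List.prefix_or_prefix_of_prefix (q.support_takeUntil_prefix_support ha)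
    (q.support_takeUntil_prefix_support hb)).imp
    (fun h => h.subset (Walk.end_mem_support _)) (fun h => h.subset (Walk.end_mem_support _))

end IsAncestor

lemma IsDFSTree.exists_mem_support_isAncestor_isAncestor {V : Type*} {K T : SimpleGraph V}
    {r : V} (hT : IsDFSTree K T r) {u v : V} (p : K.Walk u v) :
    ∃ z ∈ p.support, IsAncestor T r z u ∧ IsAncestor T r z v := by
  induction p with
  | nil => exact ⟨_, Walk.start_mem_support _, .refl T r _, .refl T r _⟩
  | @cons a b c hadj q ih =>
    obtain ⟨z, hz, hzb, hzc⟩ := ih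
    rcases hT.2.2 a b hadj with hab | hba
    · rcases IsAncestor.total hT.2.1 hzb hab with hza | haz
      · exact ⟨z, List.mem_cons_of_mem _ hz, hza, hzc⟩
      · exact ⟨a, Walk.start_mem_support _, .refl T r a, haz.trans hzc⟩
    · exact ⟨z, List.mem_cons_of_mem _ hz, hzb.trans hba, hzc⟩

theorem dfs_path_through_common_ancestor_general {V : Type*}
    (K T : SimpleGraph V) (r : V) (hT : IsDFSTree K T r)
    (u v : V)
    (p : K.Walk u v) :
    ∃ z ∈ p.support, IsAncestor T r z u ∧ IsAncestor T r z v :=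
  hT.exists_mem_support_isAncestor_isAncestor p

/-- Let `T` be a DFS tree of `K` rooted at `r`, and `u ≠ v` two vertices
not in ancestor–descendant relation in `T`, with least common ancestor `w`. Then every
path from `u` to `v` in `K` passes through a common ancestor of `u` and `v` in `T`. -/
theorem dfs_path_through_common_ancestor {V : Type*} [Fintype V]
    (K T : SimpleGraph V) (r : V) (hT : IsDFSTree K T r)
    (u v w : V) (huv : u ≠ v)
    (h1 : ¬ IsAncestor T r u v) (h2 : ¬ IsAncestor T r v u)
    (hwu : IsAncestor T r w u) (hwv : IsAncestor T r w v)
    (hlca : ∀ z : V, IsAncestor T r z u → IsAncestor T r z v → IsAncestor T r z w)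
    (p : K.Walk u v) (hp : p.IsPath) :
    ∃ z ∈ p.support, IsAncestor T r z u ∧ IsAncestor T r z v :=
  dfs_path_through_common_ancestor_general K T r hT u v p
end

section
/- Let n ≥ 1 and consider the graph G on vertex set {x_1,…,x_n} ∪ {y_1,…,y_n} ∪ {s, t, ℓ} whose edges are: a set E_H ⊆ {(x_i, y_j)} of bipartite edges; edges from s to every vertex among the x's and y's except y_j (for a fixed j); and edges (ℓ, x_i), (s, t), (t, y_j) (for a fixed i). Then G is connected, and leaf(G) = 2n + 1 if (x_i, y_j) ∈ E_H, and leaf(G) = 2n otherwise. -/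
/-- `maxLeaf G` is the maximum number of leaves (degree-one vertices) over all
spanning trees of `G`. -/
noncomputable def maxLeaf {V : Type*} (G : SimpleGraph V) : ℕ :=
  sSup {c | ∃ T : SimpleGraph V, T ≤ G ∧ T.IsTree ∧
    {v | (T.neighborSet v).ncard = 1}.ncard = c}

/-- Vertices of the lower-bound gadget: `x_1, …, x_n`, `y_1, …, y_n`, and the three
special vertices `s`, `t`, `ℓ`. -/
abbrev GadgetV (n : ℕ) := Fin n ⊕ Fin n ⊕ Fin 3

/-!
In a spanning tree with at least three vertices, every vertex is internal or adjacent to an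
internal vertex, and two internal vertices with no third one are adjacent. In `G` the pendant
vertex `ℓ` forces `x_i` to be internal, and `t` forces an internal vertex among `t, s, y_j`, so at
most `2n + 1` vertices are leaves. If `x_i y_j ∉ E_H`, then `y_j` forces an internal vertex among
`y_j, t` and the `x_a` with `a ≠ i`; with only two internal vertices they would be `x_i` and one of
`t, y_j`, neither adjacent to `x_i`. The bounds are attained by the star at `s` in which `ℓ` hangs
from `x_i`, and `y_j` hangs from `x_i` if `x_i y_j ∈ E_H` and from `t` otherwise.
-/

namespace SimpleGraph

section Leaves

variable {V : Type*} (T : SimpleGraph V)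

def leafSet : Set V := {v | (T.neighborSet v).ncard = 1}

def internalSet : Set V := {v | 2 ≤ (T.neighborSet v).ncard}

variable {T} [Finite V]

lemma mem_internalSet_iff {v : V} :
    v ∈ T.internalSet ↔ ∃ a, T.Adj v a ∧ ∃ b, T.Adj v b ∧ a ≠ b :=
  Set.one_lt_ncard

/-- The second vertex of a path of length at least two is internal. -/
lemma Reachable.exists_adj_mem_internalSet {u v : V} (h : T.Reachable u v)
    (hnadj : ¬ T.Adj u v) (huv : u ≠ v) : ∃ w, T.Adj u w ∧ w ≠ v ∧ w ∈ T.internalSet := by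
  classical
  obtain ⟨p, hp⟩ := h.some.toPath
  match p, hp with
  | .nil, _ => exact absurd rfl huv
  | .cons hw .nil, _ => exact absurd hw hnadj
  | .cons (v := w) huw (.cons hwx q), hp =>
    have hxu : _ ≠ u := fun hxu => by
      simp only [Walk.isPath_def, Walk.support_cons, List.nodup_cons] at hp
      exact hp.1 (List.mem_cons_of_mem _ (hxu ▸ q.start_mem_support))
    exact ⟨w, huw, fun hwv => hnadj (hwv ▸ huw),
      mem_internalSet_iff.2 ⟨u, huw.symm, _, hwx, hxu.symm⟩⟩

lemma Connected.mem_internalSet_or_exists_adj (hc : T.Connected) (hV : 3 ≤ Nat.card V)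
    (v : V) : v ∈ T.internalSet ∨ ∃ w, T.Adj v w ∧ w ∈ T.internalSet := by
  refine or_iff_not_imp_left.2 fun hv => ?_
  obtain ⟨u, huv, hnadj⟩ : ∃ u, u ≠ v ∧ ¬ T.Adj v u := by
    by_contra! h
    have hsub : (Set.univ : Set V) ⊆ insert v (T.neighborSet v) := fun u _ => by
      by_cases huv : u = v
      · exact Or.inl huv
      · exact Or.inr (h u huv)
    have := (Set.ncard_le_ncard hsub).trans (Set.ncard_insert_le v _)
    simp only [internalSet, Set.mem_ofPred_eq, not_le, Set.ncard_univ] at hv this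
    omega
  obtain ⟨w, hvw, -, hw⟩ := (hc.preconnected v u).exists_adj_mem_internalSet hnadj huv.symm
  exact ⟨w, hvw, hw⟩

lemma Connected.adj_of_internalSet_subset (hc : T.Connected) {u v : V} (huv : u ≠ v)
    (hI : T.internalSet ⊆ {u, v}) : T.Adj u v := by
  by_contra hnadj
  obtain ⟨w, huw, hwv, hw⟩ := (hc.preconnected u v).exists_adj_mem_internalSet hnadj huv
  rcases hI hw with rfl | rfl
  · exact huw.ne rfl
  · exact hwv rfl

lemma Connected.leafSet_eq_compl_internalSet [Nontrivial V] (hc : T.Connected) :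
    T.leafSet = T.internalSetᶜ := by
  ext v
  obtain ⟨u, hu⟩ := exists_ne v
  have := (Set.ncard_pos).2 ((hc.preconnected v u).nonempty_neighborSet_left hu.symm)
  simp only [leafSet, internalSet, Set.mem_ofPred_eq, Set.mem_compl_iff, not_le]
  omega

lemma Connected.ncard_leafSet_add_ncard_internalSet [Nontrivial V] (hc : T.Connected) :
    T.leafSet.ncard + T.internalSet.ncard = Nat.card V := by
  rw [hc.leafSet_eq_compl_internalSet, add_comm, Set.ncard_add_ncard_compl]

end Leaves

section ParentGraph

variable {V : Type*} {r : V} {p : V → V} {d : V → ℕ}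

def parentGraph (r : V) (p : V → V) : SimpleGraph V :=
  fromEdgeSet {e | ∃ v, v ≠ r ∧ e = s(v, p v)}

lemma parentGraph_adj {a b : V} :
    (parentGraph r p).Adj a b ↔ a ≠ b ∧ ((a ≠ r ∧ p a = b) ∨ (b ≠ r ∧ p b = a)) := by
  simp only [parentGraph, fromEdgeSet_adj, Set.mem_ofPred_eq, Sym2.eq_iff]
  constructor
  · rintro ⟨⟨v, hv, ⟨rfl, rfl⟩ | ⟨rfl, rfl⟩⟩, hne⟩
    · exact ⟨hne, .inl ⟨hv, rfl⟩⟩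
    · exact ⟨hne, .inr ⟨hv, rfl⟩⟩
  · rintro ⟨hne, ⟨ha, rfl⟩ | ⟨hb, rfl⟩⟩
    · exact ⟨⟨a, ha, .inl ⟨rfl, rfl⟩⟩, hne⟩
    · exact ⟨⟨b, hb, .inr ⟨rfl, rfl⟩⟩, hne⟩

lemma parentGraph_adj_parent (hd : ∀ v, v ≠ r → d (p v) < d v) {v : V} (hv : v ≠ r) :
    (parentGraph r p).Adj v (p v) :=
  parentGraph_adj.2 ⟨fun h => (hd v hv).ne (congrArg d h).symm, .inl ⟨hv, rfl⟩⟩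

lemma parentGraph_reachable (hd : ∀ v, v ≠ r → d (p v) < d v) (v : V) :
    (parentGraph r p).Reachable v r := by
  induction hk : d v using Nat.strong_induction_on generalizing v with
  | _ k ih =>
    by_cases hv : v = r
    · exact hv ▸ .refl v
    · exact (parentGraph_adj_parent hd hv).reachable.trans (ih _ (hk ▸ hd v hv) _ rfl)

lemma parentGraph_connected (hd : ∀ v, v ≠ r → d (p v) < d v) : (parentGraph r p).Connected :=
  haveI : Nonempty V := ⟨r⟩
  ⟨fun a b => (parentGraph_reachable hd a).trans (parentGraph_reachable hd b).symm⟩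

/-- Connected, and each non-root vertex contributes exactly one edge, the one to its parent. -/
lemma parentGraph_isTree [Finite V] (hd : ∀ v, v ≠ r → d (p v) < d v) :
    (parentGraph r p).IsTree := by
  have hedges : (parentGraph r p).edgeSet = (fun v => s(v, p v)) '' {r}ᶜ := by
    ext e
    simp only [parentGraph, edgeSet_fromEdgeSet, Set.mem_sdiff, Set.mem_ofPred_eq,
      Set.mem_image, Set.mem_compl_singleton_iff, Sym2.mem_diagSet]
    constructor
    · rintro ⟨⟨v, hv, rfl⟩, -⟩
      exact ⟨v, hv, rfl⟩
    · rintro ⟨v, hv, rfl⟩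
      exact ⟨⟨v, hv, rfl⟩, fun h => (hd v hv).ne (congrArg d (Sym2.mk_isDiag_iff.1 h)).symm⟩
  have hinj : Set.InjOn (fun v => s(v, p v)) {r}ᶜ := by
    intro v hv w hw h
    rcases Sym2.eq_iff.1 h with ⟨hvw, -⟩ | ⟨hv', hw'⟩
    · exact hvw
    · have hlt_w := hd w hw
      have hlt_v := hd v hv
      rw [← hv'] at hlt_w
      rw [hw'] at hlt_v
      omega
  have : Nonempty V := ⟨r⟩
  rw [isTree_iff_connected_and_card, Nat.card_coe_set_eq, hedges, hinj.ncard_image,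
    Set.ncard_compl, Set.ncard_singleton]
  exact ⟨parentGraph_connected hd, Nat.sub_add_cancel Nat.card_pos⟩

lemma neighborSet_parentGraph (hd : ∀ v, v ≠ r → d (p v) < d v) {v : V} (hv : v ≠ r) :
    (parentGraph r p).neighborSet v = insert (p v) {w | w ≠ r ∧ p w = v} := by
  ext w
  simp only [mem_neighborSet, parentGraph_adj, Set.mem_insert_iff, Set.mem_ofPred_eq]
  constructor
  · rintro ⟨-, ⟨-, h⟩ | h⟩
    · exact .inl h.symm
    · exact .inr h
  · rintro (rfl | ⟨hw, rfl⟩)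
    · exact ⟨fun h => (hd v hv).ne (congrArg d h).symm, .inl ⟨hv, rfl⟩⟩
    · exact ⟨fun h => (hd w hw).ne (congrArg d h), .inr ⟨hw, rfl⟩⟩

lemma mem_internalSet_parentGraph_iff [Finite V] (hd : ∀ v, v ≠ r → d (p v) < d v) {v : V}
    (hv : v ≠ r) : v ∈ (parentGraph r p).internalSet ↔ ∃ w, w ≠ r ∧ p w = v := by
  have hpv : p v ∉ {w | w ≠ r ∧ p w = v} := fun ⟨hpr, hppv⟩ => by
    have := hd v hv
    have := hd (p v) hpr
    rw [hppv] at this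
    omega
  simp only [internalSet, Set.mem_ofPred_eq, neighborSet_parentGraph hd hv,
    Set.ncard_insert_of_notMem hpv, Nat.reduceLeDiff]
  exact Set.ncard_pos

end ParentGraph

end SimpleGraph

open SimpleGraph

namespace GadgetV

variable {n : ℕ}

@[simp] abbrev xv (a : Fin n) : GadgetV n := .inl a
@[simp] abbrev yv (b : Fin n) : GadgetV n := .inr (.inl b)
@[simp] abbrev sv : GadgetV n := .inr (.inr 0)
@[simp] abbrev tv : GadgetV n := .inr (.inr 1)
@[simp] abbrev ℓv : GadgetV n := .inr (.inr 2)

lemma card_eq : Nat.card (GadgetV n) = 2 * n + 3 := by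
  simp only [Nat.card_eq_fintype_card, Fintype.card_sum, Fintype.card_fin]
  ring

lemma three_le_card : 3 ≤ Nat.card (GadgetV n) := by
  rw [card_eq]
  omega

instance : Nontrivial (GadgetV n) := ⟨⟨sv, tv, by simp⟩⟩

variable {i j : Fin n} {EH : Finset (Fin n × Fin n)}

def graph (i j : Fin n) (EH : Finset (Fin n × Fin n)) : SimpleGraph (GadgetV n) :=
  fromEdgeSet {e | (∃ a b, (a, b) ∈ EH ∧ e = s(xv a, yv b)) ∨ (∃ a, e = s(sv, xv a)) ∨
    (∃ b, b ≠ j ∧ e = s(sv, yv b)) ∨ e = s(ℓv, xv i) ∨ e = s(sv, tv) ∨ e = s(tv, yv j)}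

lemma graph_adj_ℓv {w : GadgetV n} (h : (graph i j EH).Adj ℓv w) : w = xv i := by
  simp only [graph, fromEdgeSet_adj, Set.mem_ofPred_eq, Sym2.eq_iff] at h
  aesop

lemma graph_adj_tv {w : GadgetV n} (h : (graph i j EH).Adj tv w) :
    w = sv ∨ w = yv j := by
  simp only [graph, fromEdgeSet_adj, Set.mem_ofPred_eq, Sym2.eq_iff] at h
  aesop

lemma graph_adj_yv {w : GadgetV n} (h : (graph i j EH).Adj (yv j) w) :
    w = tv ∨ ∃ a, (a, j) ∈ EH ∧ w = xv a := by
  simp only [graph, fromEdgeSet_adj, Set.mem_ofPred_eq, Sym2.eq_iff] at h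
  aesop

section UpperBound

variable {T : SimpleGraph (GadgetV n)}

lemma mem_internalSet_xv (hT : T ≤ graph i j EH) (hc : T.Connected) :
    xv i ∈ T.internalSet := by
  rcases hc.mem_internalSet_or_exists_adj three_le_card ℓv with hℓ | ⟨w, hw, hwI⟩
  · obtain ⟨a, ha, b, hb, hab⟩ := mem_internalSet_iff.1 hℓ
    exact absurd ((graph_adj_ℓv (hT ha)).trans (graph_adj_ℓv (hT hb)).symm) hab
  · exact graph_adj_ℓv (hT hw) ▸ hwI

lemma exists_mem_internalSet_near_tv (hT : T ≤ graph i j EH) (hc : T.Connected) :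
    ∃ v ∈ T.internalSet, v = tv ∨ v = sv ∨ v = yv j := by
  rcases hc.mem_internalSet_or_exists_adj three_le_card tv with ht | ⟨w, hw, hwI⟩
  · exact ⟨tv, ht, .inl rfl⟩
  · exact ⟨w, hwI, .inr (graph_adj_tv (hT hw))⟩

lemma exists_mem_internalSet_near_yv (hT : T ≤ graph i j EH) (hc : T.Connected) :
    ∃ v ∈ T.internalSet, v = yv j ∨ v = tv ∨ ∃ a, (a, j) ∈ EH ∧ v = xv a := by
  rcases hc.mem_internalSet_or_exists_adj three_le_card (yv j) with hy | ⟨w, hw, hwI⟩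
  · exact ⟨yv j, hy, .inl rfl⟩
  · exact ⟨w, hwI, .inr (graph_adj_yv (hT hw))⟩

lemma two_le_ncard_internalSet (hT : T ≤ graph i j EH) (hc : T.Connected) :
    2 ≤ T.internalSet.ncard := by
  obtain ⟨v, hv, hv'⟩ := exists_mem_internalSet_near_tv hT hc
  have hne : xv i ≠ v := by rcases hv' with rfl | rfl | rfl <;> simp
  rw [← Set.ncard_pair hne]
  exact Set.ncard_le_ncard (Set.insert_subset (mem_internalSet_xv hT hc) (by simpa using hv))

lemma three_le_ncard_internalSet (hT : T ≤ graph i j EH) (hc : T.Connected)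
    (hij : (i, j) ∉ EH) : 3 ≤ T.internalSet.ncard := by
  by_contra! hI
  obtain ⟨v, hv, hv'⟩ := exists_mem_internalSet_near_tv hT hc
  obtain ⟨w, hw, hw'⟩ := exists_mem_internalSet_near_yv hT hc
  have hne : xv i ≠ v := by rcases hv' with rfl | rfl | rfl <;> simp
  have hpair : {xv i, v} = T.internalSet :=
    Set.eq_of_subset_of_ncard_le (Set.insert_subset (mem_internalSet_xv hT hc) (by simpa using hv))
      (by rw [Set.ncard_pair hne]; omega)
  have hwv : w = v := by
    rcases (hpair ▸ hw : w ∈ ({xv i, v} : Set _)) with rfl | rfl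
    · rcases hw' with h | h | ⟨a, ha, h⟩
      · simp at h
      · simp at h
      · exact absurd (Sum.inl_injective h ▸ ha) hij
    · rfl
  have hG : (graph i j EH).Adj v (xv i) := hT (hc.adj_of_internalSet_subset hne hpair.ge).symm
  subst hwv
  rcases hv' with rfl | rfl | rfl
  · simpa using graph_adj_tv hG
  · simp at hw'
  · rcases graph_adj_yv hG with h | ⟨a, ha, h⟩
    · simp at h
    · exact hij (Sum.inl_injective h ▸ ha)

lemma ncard_leafSet_le (hT : T ≤ graph i j EH) (hc : T.Connected) :
    T.leafSet.ncard ≤ if (i, j) ∈ EH then 2 * n + 1 else 2 * n := by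
  have hsum := hc.ncard_leafSet_add_ncard_internalSet
  rw [card_eq] at hsum
  split_ifs with hij
  · have := two_le_ncard_internalSet hT hc
    omega
  · have := three_le_ncard_internalSet hT hc hij
    omega

end UpperBound

section LowerBound

def parent (i j : Fin n) (q v : GadgetV n) : GadgetV n :=
  if v = ℓv then xv i else if v = yv j then q else sv

def depth (j : Fin n) (v : GadgetV n) : ℕ :=
  if v = sv then 0 else if v = ℓv ∨ v = yv j then 2 else 1

variable {q : GadgetV n}

lemma depth_parent_lt (hq : q = tv ∨ q = xv i) (v : GadgetV n) (hv : v ≠ sv) :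
    depth j (parent i j q v) < depth j v := by
  rcases hq with rfl | rfl <;> unfold parent depth <;> split_ifs <;> simp_all

lemma graph_adj_parent (hq : q = tv ∨ (i, j) ∈ EH ∧ q = xv i) {v : GadgetV n}
    (hv : v ≠ sv) : (graph i j EH).Adj v (parent i j q v) := by
  simp only [graph, parent, fromEdgeSet_adj, Set.mem_ofPred_eq]
  rcases v with a | b | k
  · simp
  · by_cases hb : b = j
    · rcases hq with rfl | ⟨hij, rfl⟩ <;> simp_all
    · simp [hb]
  · fin_cases k <;> simp_all

lemma parentGraph_parent_le (hq : q = tv ∨ (i, j) ∈ EH ∧ q = xv i) :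
    parentGraph sv (parent i j q) ≤ graph i j EH := by
  intro a b hab
  rcases parentGraph_adj.1 hab with ⟨-, ⟨ha, rfl⟩ | ⟨hb, rfl⟩⟩
  · exact graph_adj_parent hq ha
  · exact (graph_adj_parent hq hb).symm

lemma internalSet_parentGraph_parent (hq : q = tv ∨ q = xv i) :
    (parentGraph sv (parent i j q)).internalSet = {sv, xv i, q} := by
  have hd := depth_parent_lt (j := j) hq
  ext v
  by_cases hv : v = sv
  · subst hv
    refine iff_of_true (mem_internalSet_iff.2 ⟨tv, ?_, xv i, ?_, by simp⟩) (by simp)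
    · exact (parentGraph_adj_parent hd (v := tv) (by simp)).symm
    · exact (parentGraph_adj_parent hd (v := xv i) (by simp)).symm
  rw [mem_internalSet_parentGraph_iff hd hv]
  constructor
  · rintro ⟨w, -, rfl⟩
    unfold parent
    split_ifs <;> simp_all
  · rintro (h | rfl | rfl)
    · exact absurd h hv
    · exact ⟨ℓv, by simp, by simp [parent]⟩
    · exact ⟨yv j, by simp, by simp [parent]⟩

lemma exists_isTree_le_graph_ncard_leafSet_add (hq : q = tv ∨ (i, j) ∈ EH ∧ q = xv i) :
    ∃ T ≤ graph i j EH, T.IsTree ∧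
      T.leafSet.ncard + ({sv, xv i, q} : Set (GadgetV n)).ncard = 2 * n + 3 := by
  have hq' : q = tv ∨ q = xv i := hq.imp_right And.right
  have hd := depth_parent_lt (j := j) hq'
  refine ⟨_, parentGraph_parent_le hq, parentGraph_isTree hd, ?_⟩
  rw [← internalSet_parentGraph_parent hq', ← card_eq]
  exact (parentGraph_connected hd).ncard_leafSet_add_ncard_internalSet

lemma exists_isTree_le_graph (i j : Fin n) (EH : Finset (Fin n × Fin n)) :
    ∃ T ≤ graph i j EH, T.IsTree ∧
      T.leafSet.ncard = if (i, j) ∈ EH then 2 * n + 1 else 2 * n := by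
  by_cases hij : (i, j) ∈ EH
  · obtain ⟨T, hle, htree, hleaves⟩ := exists_isTree_le_graph_ncard_leafSet_add (.inr ⟨hij, rfl⟩)
    refine ⟨T, hle, htree, ?_⟩
    simp only [Set.insert_eq_of_mem (Set.mem_singleton _)] at hleaves
    rw [Set.ncard_pair (by simp)] at hleaves
    simp only [hij, if_true]
    omega
  · obtain ⟨T, hle, htree, hleaves⟩ :=
      exists_isTree_le_graph_ncard_leafSet_add (EH := EH) (j := j) (.inl rfl)
    refine ⟨T, hle, htree, ?_⟩
    rw [Set.ncard_insert_of_notMem (by simp), Set.ncard_pair (by simp)] at hleaves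
    simp only [hij, if_false]
    omega

end LowerBound

end GadgetV

theorem index_reduction_leaf_count_general (n : ℕ) (i j : Fin n)
    (EH : Finset (Fin n × Fin n)) :
    ∀ G : SimpleGraph (GadgetV n),
      G = SimpleGraph.fromEdgeSet
        ({e | (∃ a b : Fin n, (a, b) ∈ EH ∧
                e = s(Sum.inl a, Sum.inr (Sum.inl b))) ∨
              (∃ a : Fin n, e = s(Sum.inr (Sum.inr 0), Sum.inl a)) ∨
              (∃ b : Fin n, b ≠ j ∧ e = s(Sum.inr (Sum.inr 0), Sum.inr (Sum.inl b))) ∨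
              e = s(Sum.inr (Sum.inr 2), Sum.inl i) ∨
              e = s(Sum.inr (Sum.inr 0), Sum.inr (Sum.inr 1)) ∨
              e = s(Sum.inr (Sum.inr 1), Sum.inr (Sum.inl j))} :
            Set (Sym2 (GadgetV n))) →
      G.Connected ∧ maxLeaf G = (if (i, j) ∈ EH then 2 * n + 1 else 2 * n) := by
  rintro G rfl
  change (GadgetV.graph i j EH).Connected ∧ maxLeaf (GadgetV.graph i j EH) = _
  obtain ⟨T, hle, htree, hleaves⟩ := GadgetV.exists_isTree_le_graph i j EH
  refine ⟨htree.connected.mono hle, IsGreatest.csSup_eq ⟨⟨T, hle, htree, hleaves⟩, ?_⟩⟩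
  rintro _ ⟨T', hle', htree', rfl⟩
  exact GadgetV.ncard_leafSet_le hle' htree'.connected

/-- For `n ≥ 1`, fixed `i, j`, and any set `E_H` of bipartite edges
`(x_a, y_b)`, consider the graph `G` on `{x_1,…,x_n} ∪ {y_1,…,y_n} ∪ {s,t,ℓ}` with the
bipartite edges `E_H`, edges from `s` to every `x_a` and to every `y_b` with `b ≠ j`, and
edges `(ℓ, x_i)`, `(s, t)`, `(t, y_j)`. Then `G` is connected and
`leaf(G) = 2n + 1` if `(x_i, y_j) ∈ E_H` and `leaf(G) = 2n` otherwise. -/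
theorem index_reduction_leaf_count (n : ℕ) (hn : 1 ≤ n) (i j : Fin n)
    (EH : Finset (Fin n × Fin n)) :
    ∀ G : SimpleGraph (GadgetV n),
      G = SimpleGraph.fromEdgeSet
        ({e | (∃ a b : Fin n, (a, b) ∈ EH ∧
                e = s(Sum.inl a, Sum.inr (Sum.inl b))) ∨
              (∃ a : Fin n, e = s(Sum.inr (Sum.inr 0), Sum.inl a)) ∨
              (∃ b : Fin n, b ≠ j ∧ e = s(Sum.inr (Sum.inr 0), Sum.inr (Sum.inl b))) ∨
              e = s(Sum.inr (Sum.inr 2), Sum.inl i) ∨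
              e = s(Sum.inr (Sum.inr 0), Sum.inr (Sum.inr 1)) ∨
              e = s(Sum.inr (Sum.inr 1), Sum.inr (Sum.inl j))} :
            Set (Sym2 (GadgetV n))) →
      G.Connected ∧ maxLeaf G = (if (i, j) ∈ EH then 2 * n + 1 else 2 * n) :=
  index_reduction_leaf_count_general n i j EH
end
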